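/- arXiv:2404.08196 — 2 statements merged into one kernel-verified Lean document; each statement's English description precedes it below -/
import Mathlib

section
/- Let p > 2 and G(t) = |t|^{p−2}t for t ∈ ℝ. There exists a constant c₁ > 0, depending only on p, such that for all real numbers t₁ < t₂ and every ξ ∈ ℝ satisfying G(t₂) − G(t₁) = G′(ξ)·(t₂ − t₁), where G′(ξ) = (p−1)|ξ|^{p−2}, one has |ξ| ≥ c₁·max{|t₁|, |t₂|}. -/
open Real

private lemma bern {x y q : ℝ} (hy : 0 < y) (hxy : y ≤ x) (hq : 1 ≤ q) :
    q * y ^ (q - 1) * (x - y) ≤ x ^ q - y ^ q := by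
  have hx : 0 < x := hy.trans_le hxy
  have hs : (-1 : ℝ) ≤ x / y - 1 := by
    have : 0 < x / y := div_pos hx hy
    linarith
  have h := one_add_mul_self_le_rpow_one_add hs hq
  rw [add_sub_cancel] at h
  have h2 : (1 + q * (x / y - 1)) * y ^ q ≤ (x / y) ^ q * y ^ q :=
    mul_le_mul_of_nonneg_right h (rpow_nonneg hy.le q)
  rw [div_rpow hx.le hy.le, div_mul_cancel₀] at h2
  · have hyq : y ^ (q - 1) = y ^ q / y := by
      rw [rpow_sub hy, rpow_one]
    rw [hyq]
    have : q * (y ^ q / y) * (x - y) = q * (x / y - 1) * y ^ q := by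
      field_simp
    rw [this]; nlinarith [rpow_nonneg hy.le q]
  · exact (rpow_pos_of_pos hy q).ne'

private lemma slopeG {p a b : ℝ} (hp : 2 < p) (hab : a < b) (hb : |a| ≤ b) :
    2 ^ (-p) * b ^ (p - 2) * (b - a) ≤ b ^ (p - 2) * b - |a| ^ (p - 2) * a := by
  have hb0 : 0 < b := by
    rcases lt_or_ge 0 b with h | h
    · exact h
    · linarith [neg_abs_le a, le_abs_self a]
  have hbp1 : b ^ (p - 2) * b = b ^ (p - 1) := by
    nth_rewrite 2 [← rpow_one b]
    rw [← rpow_add hb0]; ring_nf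
  have h2p : (0:ℝ) < 2 ^ (-p) := rpow_pos_of_pos two_pos _
  rcases le_or_gt a (b / 2) with hc | hc
  · -- a ≤ b/2 : G(a) ≤ (b/2)^{p-1}
    have hGa : |a| ^ (p - 2) * a ≤ (b / 2) ^ (p - 1) := by
      rcases le_or_gt a 0 with ha | ha
      · have : |a| ^ (p - 2) * a ≤ 0 :=
          mul_nonpos_of_nonneg_of_nonpos (rpow_nonneg (abs_nonneg a) _) ha
        exact this.trans (rpow_nonneg (by positivity) _)
      · rw [abs_of_pos ha]
        calc a ^ (p - 2) * a = a ^ (p - 1) := by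
              nth_rewrite 2 [← rpow_one a]
              rw [← rpow_add ha]; ring_nf
          _ ≤ (b / 2) ^ (p - 1) := rpow_le_rpow ha.le hc (by linarith)
    have hhalf : (b / 2) ^ (p - 1) ≤ (1/2) * b ^ (p - 1) := by
      rw [div_rpow hb0.le (by norm_num)]
      rw [div_le_iff₀ (by positivity)]
      have h21 : (2:ℝ) ≤ 2 ^ (p - 1) := by
        nth_rewrite 1 [← rpow_one (2:ℝ)]
        exact rpow_le_rpow_left_iff one_lt_two |>.mpr (by linarith)
      nlinarith [rpow_nonneg hb0.le (p - 1)]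
    have hba : b - a ≤ 2 * b := by have := abs_le.mp hb; linarith [this.1]
    calc 2 ^ (-p) * b ^ (p - 2) * (b - a) ≤ 2 ^ (-p) * b ^ (p-2) * (2 * b) :=
          mul_le_mul_of_nonneg_left hba (by positivity)
      _ = 2 ^ (-p) * 2 * b ^ (p - 1) := by rw [← hbp1]; ring
      _ ≤ (1/2) * b ^ (p - 1) := by
          have hle : 2 ^ (-p) * 2 ≤ (1/2 : ℝ) := by
            have h1 : (2:ℝ) ^ (-p) ≤ 2 ^ (-(2:ℝ)) :=
              rpow_le_rpow_left_iff one_lt_two |>.mpr (by linarith)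
            have h22 : (2:ℝ) ^ (-(2:ℝ)) = 1/4 := by
              rw [show (-(2:ℝ)) = ((-2 : ℤ) : ℝ) by norm_num, rpow_intCast]
              norm_num
            rw [h22] at h1
            linarith
          nlinarith [rpow_nonneg hb0.le (p - 1)]
      _ ≤ b ^ (p - 1) - (b / 2) ^ (p - 1) := by
          nlinarith [rpow_nonneg (by positivity : (0:ℝ) ≤ b/2) (p-1)]
      _ ≤ b ^ (p - 2) * b - |a| ^ (p - 2) * a := by rw [hbp1]; linarith
  · -- b/2 < a < b
    have ha : 0 < a := by linarith
    rw [abs_of_pos ha]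
    have hap1 : a ^ (p - 2) * a = a ^ (p - 1) := by
      nth_rewrite 2 [← rpow_one a]
      rw [← rpow_add ha]; ring_nf
    have hB := bern (x := b) (y := a) ha hab.le (q := p - 1) (by linarith)
    have hq1 : p - 1 - 1 = p - 2 := by ring
    rw [hq1] at hB
    have hcoef : 2 ^ (-p) * b ^ (p - 2) ≤ (p - 1) * a ^ (p - 2) := by
      have h1 : (b / 2) ^ (p - 2) ≤ a ^ (p - 2) :=
        rpow_le_rpow (by positivity) hc.le (by linarith)
      have e1 : (b / 2) ^ (p - 2) = 2 ^ (-(p-2)) * b ^ (p - 2) := by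
        rw [div_rpow hb0.le (by norm_num), rpow_neg (by norm_num)]
        ring
      have h2 : (2:ℝ) ^ (-p) ≤ 2 ^ (-(p-2)) :=
        rpow_le_rpow_left_iff one_lt_two |>.mpr (by linarith)
      have h3 : 2 ^ (-p) * b ^ (p-2) ≤ 2 ^ (-(p-2)) * b ^ (p-2) :=
        mul_le_mul_of_nonneg_right h2 (rpow_nonneg hb0.le _)
      have h4 : a ^ (p - 2) ≤ (p - 1) * a ^ (p - 2) := by
        nlinarith [rpow_nonneg ha.le (p-2)]
      linarith [e1 ▸ h1]
    have hfin : 2 ^ (-p) * b ^ (p - 2) * (b - a) ≤ (p - 1) * a ^ (p - 2) * (b - a) :=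
      mul_le_mul_of_nonneg_right hcoef (by linarith)
    rw [hap1, hbp1]
    linarith

private lemma slopeG2 {p t₁ t₂ : ℝ} (hp : 2 < p) (h12 : t₁ < t₂) :
    2 ^ (-p) * (max |t₁| |t₂|) ^ (p - 2) * (t₂ - t₁) ≤
      |t₂| ^ (p - 2) * t₂ - |t₁| ^ (p - 2) * t₁ := by
  rcases le_or_gt |t₁| |t₂| with h | h
  · have ht2 : 0 < t₂ := by
      rcases lt_or_ge 0 t₂ with h' | h'
      · exact h'
      · rw [abs_of_nonpos h', abs_of_neg (h12.trans_le h')] at h; linarith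
    rw [max_eq_right h]
    have := slopeG hp h12 (by rwa [abs_of_pos ht2] at h)
    rw [abs_of_pos ht2]
    convert this using 2
  · have ht1 : t₁ < 0 := by
      rcases lt_or_ge t₁ 0 with h' | h'
      · exact h'
      · rw [abs_of_nonneg h', abs_of_pos (h'.trans_lt h12)] at h; linarith
    rw [max_eq_left h.le]
    have key := slopeG hp (by linarith : -t₂ < -t₁)
      (by rw [abs_neg]; rw [abs_of_neg ht1] at h; exact h.le)
    rw [abs_neg] at key
    rw [abs_of_neg ht1] at *
    nlinarith [key]

/-- for `G(t) = |t|^{p-2} t` with `p > 2`, any mean-value point `ξ` with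
`G(t₂) - G(t₁) = G'(ξ)(t₂ - t₁)` satisfies `|ξ| ≥ c₁ · max(|t₁|, |t₂|)` for a constant
`c₁ > 0` depending only on `p`. -/
theorem stmt_5 (p : ℝ) (hp : 2 < p) :
    ∃ c₁ > (0 : ℝ), ∀ t₁ t₂ ξ : ℝ, t₁ < t₂ →
      |t₂| ^ (p - 2) * t₂ - |t₁| ^ (p - 2) * t₁ = (p - 1) * |ξ| ^ (p - 2) * (t₂ - t₁) →
      c₁ * max |t₁| |t₂| ≤ |ξ| := by
  have hp1 : (0:ℝ) < p - 1 := by linarith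
  have hp2 : (0:ℝ) < p - 2 := by linarith
  set K : ℝ := 2 ^ (-p) / (p - 1) with hK
  have hK0 : 0 < K := div_pos (rpow_pos_of_pos two_pos _) hp1
  refine ⟨K ^ (p - 2)⁻¹, rpow_pos_of_pos hK0 _, fun t₁ t₂ ξ h12 heq => ?_⟩
  set M : ℝ := max |t₁| |t₂| with hM
  have hM0 : 0 ≤ M := le_trans (abs_nonneg t₁) (le_max_left _ _)
  have hslope := slopeG2 hp h12
  rw [heq] at hslope
  have hcancel : 2 ^ (-p) * M ^ (p - 2) ≤ (p - 1) * |ξ| ^ (p - 2) :=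
    le_of_mul_le_mul_right (by linarith) (by linarith : 0 < t₂ - t₁)
  have hKM : K * M ^ (p - 2) ≤ |ξ| ^ (p - 2) := by
    rw [hK, div_mul_eq_mul_div, div_le_iff₀ hp1]
    linarith
  by_contra hcon
  push_neg at hcon
  have hlt : |ξ| ^ (p - 2) < (K ^ (p - 2)⁻¹ * M) ^ (p - 2) :=
    rpow_lt_rpow (abs_nonneg ξ) hcon hp2
  rw [mul_rpow (rpow_nonneg hK0.le _) hM0,
    Real.rpow_inv_rpow hK0.le hp2.ne'] at hlt
  linarith
end

section
/- Let p ≥ 2 and let t₁, t₂ be real numbers with t₁ + t₂ > 0. Then |t₁ + t₂|^{p−2}(t₁ + t₂) ≤ 2^{p−2}·(|t₁|^{p−2}t₁ + |t₂|^{p−2}t₂). -/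
lemma real_conv (p a b : ℝ) (hp : 1 ≤ p) (ha : 0 ≤ a) (hb : 0 ≤ b) :
    (a + b) ^ p ≤ 2 ^ (p - 1) * (a ^ p + b ^ p) := by
  have h := NNReal.rpow_add_le_mul_rpow_add_rpow a.toNNReal b.toNNReal hp
  have h2 := (NNReal.coe_le_coe.2 h)
  push_cast [NNReal.coe_rpow, Real.coe_toNNReal a ha, Real.coe_toNNReal b hb] at h2
  exact h2

lemma real_superadd (p a b : ℝ) (hp : 1 ≤ p) (ha : 0 ≤ a) (hb : 0 ≤ b) :
    a ^ p + b ^ p ≤ (a + b) ^ p := by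
  have h := NNReal.add_rpow_le_rpow_add a.toNNReal b.toNNReal hp
  have h2 := (NNReal.coe_le_coe.2 h)
  push_cast [NNReal.coe_rpow, Real.coe_toNNReal a ha, Real.coe_toNNReal b hb] at h2
  exact h2

lemma phi_eq (p t : ℝ) (hp : 2 ≤ p) (ht : 0 ≤ t) : |t| ^ (p - 2) * t = t ^ (p - 1) := by
  rcases eq_or_lt_of_le ht with rfl | ht
  · simp [Real.zero_rpow (by linarith : p - 1 ≠ 0)]
  · rw [abs_of_pos ht, ← Real.rpow_add_one ht.ne']
    congr 1; ring

lemma aux_neg (p t₁ t₂ : ℝ) (hp : 2 ≤ p) (h : 0 < t₁ + t₂) (ht₂ : t₂ < 0) :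
    |t₁ + t₂| ^ (p - 2) * (t₁ + t₂) ≤
      2 ^ (p - 2) * (|t₁| ^ (p - 2) * t₁ + |t₂| ^ (p - 2) * t₂) := by
  have ht₁ : 0 < t₁ := by linarith
  set s := t₁ + t₂ with hs
  set a := -t₂ with hadef
  have ha : 0 < a := by simp [hadef]; linarith
  have hphi2 : |t₂| ^ (p - 2) * t₂ = -(a ^ (p - 1)) := by
    have : |t₂| = a := by rw [abs_of_neg ht₂]
    rw [this, show t₂ = -a by simp [hadef], ← phi_eq p a hp ha.le,
      abs_of_pos ha]
    ring
  rw [phi_eq p s hp h.le, phi_eq p t₁ hp ht₁.le, hphi2]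
  have ht₁eq : t₁ = s + a := by simp [hs, hadef]
  have hsup : s ^ (p - 1) + a ^ (p - 1) ≤ (s + a) ^ (p - 1) :=
    real_superadd (p - 1) s a (by linarith) h.le ha.le
  have h2 : (1 : ℝ) ≤ 2 ^ (p - 2) :=
    Real.one_le_rpow one_le_two (by linarith : (0:ℝ) ≤ p - 2)
  have hspos : (0 : ℝ) ≤ s ^ (p - 1) := Real.rpow_nonneg h.le _
  rw [ht₁eq]
  nlinarith [mul_le_mul_of_nonneg_left hsup (le_trans zero_le_one h2)]

/-- the elementary `L^p`-inequality
`|t₁+t₂|^{p-2}(t₁+t₂) ≤ 2^{p-2} (|t₁|^{p-2} t₁ + |t₂|^{p-2} t₂)` for `p ≥ 2` and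
`t₁ + t₂ > 0`. -/
theorem stmt_6 (p t₁ t₂ : ℝ) (hp : 2 ≤ p) (h : 0 < t₁ + t₂) :
    |t₁ + t₂| ^ (p - 2) * (t₁ + t₂) ≤
      2 ^ (p - 2) * (|t₁| ^ (p - 2) * t₁ + |t₂| ^ (p - 2) * t₂) := by
  rcases lt_or_ge t₂ 0 with ht₂ | ht₂
  · exact aux_neg p t₁ t₂ hp h ht₂
  rcases lt_or_ge t₁ 0 with ht₁ | ht₁
  · have := aux_neg p t₂ t₁ hp (by linarith) ht₁
    rw [add_comm t₂ t₁] at this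
    linarith
  · rw [phi_eq p (t₁ + t₂) hp h.le, phi_eq p t₁ hp ht₁, phi_eq p t₂ hp ht₂]
    have := real_conv (p - 1) t₁ t₂ (by linarith) ht₁ ht₂
    convert this using 3
    ring
end
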